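/- Fix N ≥ 1 and k > 0, and let G : ℝ^N → ℝ^N be differentiable with each component G_i convex. Let 0 < T < +∞ and let (M, U) : [0, T) → ℝ^N × ℝ^N, M(t) = (m_1(t),…,m_N(t)), U(t) = (u_1(t),…,u_N(t)), be a differentiable solution of the discrete Hessian Riemannian flow with m_i(t) > 0 for all i and t ∈ [0, T), and (1/N)Σ_{i=1}^N m_i(0) = 1. Suppose there exists (M*, U*) ∈ ℝ^N × ℝ^N with all components m*_i > 0, (1/N)Σ_{i=1}^N m*_i = 1, and F̃(M*, U*) = 0. Then sup_{t ∈ [0,T)} (Σ_{j=1}^N (m_j(t)² + u_j(t)²))^{1/2} < +∞. -/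

import Mathlib

/-- The discrete entropy-penalized effective Hamiltonian
`H̃(M,U) = (∑ᵢ (mᵢ Gᵢ(U) − (1/k) mᵢ ln mᵢ)) / (∑ᵢ mᵢ)`. -/
noncomputable def Htilde {N : ℕ} (k : ℝ) (G : (Fin N → ℝ) → (Fin N → ℝ))
    (M U : Fin N → ℝ) : ℝ :=
  (∑ i, (M i * G U i - (1 / k) * (M i * Real.log (M i)))) / ∑ i, M i

/-- First block of `F̃(M,U)`: `(−Gᵢ(U) + H̃(M,U) + (1/k) ln mᵢ)ᵢ`. -/
noncomputable def Ftilde1 {N : ℕ} (k : ℝ) (G : (Fin N → ℝ) → (Fin N → ℝ))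
    (M U : Fin N → ℝ) (i : Fin N) : ℝ :=
  -(G U i) + Htilde k G M U + (1 / k) * Real.log (M i)

/-- Second block of `F̃(M,U)` (and of `F̄(M,U)`): the vector `DG(U)ᵀ M`. -/
noncomputable def Ftilde2 {N : ℕ} (G : (Fin N → ℝ) → (Fin N → ℝ))
    (M U : Fin N → ℝ) (j : Fin N) : ℝ :=
  ∑ i, M i * (fderiv ℝ G U) (Pi.single j 1) i

/-- First block of `F̄(M,U)`: `(mᵢ(−Gᵢ(U) + H̃(M,U) + (1/k) ln mᵢ))ᵢ`. -/
noncomputable def Fbar1 {N : ℕ} (k : ℝ) (G : (Fin N → ℝ) → (Fin N → ℝ))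
    (M U : Fin N → ℝ) (i : Fin N) : ℝ :=
  M i * Ftilde1 k G M U i

/-!
Along the flow the total mass `∑ mᵢ` is conserved, because `∑ᵢ F̄ᵢ = 0`. The function
`W(M,U) = ∑ᵢ (m*ᵢ (ln m*ᵢ − ln mᵢ) − m*ᵢ + mᵢ) + ½ |U − U*|²` then decreases: its derivative
along the flow is `−⟨(M − M*, U − U*), F̃(M,U) − F̃(M*,U*)⟩`, and `F̃` is monotone on a level set
of the mass, by convexity of the `Gᵢ` and monotonicity of `ln`. Since the entropy part of `W` is
nonnegative, `|U − U*|² ≤ 2 W(0)`, while `M` stays in the simplex of mass `N`.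
-/

open Set Finset Real

lemma ConvexOn.apply_sub_le_of_hasFDerivAt {E : Type*} [NormedAddCommGroup E] [NormedSpace ℝ E]
    {f : E → ℝ} {f' : E →L[ℝ] ℝ} {x : E} (hf : ConvexOn ℝ univ f) (hfx : HasFDerivAt f f' x)
    (y : E) : f' (y - x) ≤ f y - f x := by
  have hline : ConvexOn ℝ univ (f ∘ AffineMap.lineMap (k := ℝ) x y) := hf.comp_affineMap _
  have hfx' : HasFDerivAt f f' (AffineMap.lineMap x y (0 : ℝ)) := by simpa using hfx
  have hderiv : HasDerivAt (f ∘ AffineMap.lineMap (k := ℝ) x y) (f' (y - x)) 0 :=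
    hfx'.comp_hasDerivAt 0 AffineMap.hasDerivAt_lineMap
  simpa [slope_def_field] using
    hline.le_slope_of_hasDerivAt (mem_univ 0) (mem_univ 1) zero_lt_one hderiv

lemma fderiv_apply_sub_le_of_convexOn {E ι : Type*} [NormedAddCommGroup E] [NormedSpace ℝ E]
    [Fintype ι] {G : E → ι → ℝ} (hG : Differentiable ℝ G)
    (hconv : ∀ i, ConvexOn ℝ univ fun x => G x i) (x y : E) (i : ι) :
    fderiv ℝ G x (y - x) i ≤ G y i - G x i :=
  (hconv i).apply_sub_le_of_hasFDerivAt (hasFDerivAt_pi'.1 (hG x).hasFDerivAt i) y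

lemma sum_mul_apply_single {ι κ : Type*} [Fintype ι] [DecidableEq ι]
    (L : (ι → ℝ) →L[ℝ] (κ → ℝ)) (v : ι → ℝ) (i : κ) :
    ∑ j, v j * L (Pi.single j 1) i = L v i := by
  conv_rhs => rw [pi_eq_sum_univ' v]
  simp [Finset.sum_apply]

lemma sub_mul_log_sub_log_nonneg {a b : ℝ} (ha : 0 < a) (hb : 0 < b) :
    0 ≤ (a - b) * (log a - log b) := by
  rcases le_total b a with hab | hab
  · exact mul_nonneg (sub_nonneg.2 hab) (sub_nonneg.2 (log_le_log hb hab))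
  · exact mul_nonneg_of_nonpos_of_nonpos (sub_nonpos.2 hab) (sub_nonpos.2 (log_le_log ha hab))

lemma mul_log_sub_log_sub_add_nonneg {a b : ℝ} (ha : 0 < a) (hb : 0 < b) :
    0 ≤ a * (log a - log b) - a + b := by
  have h := mul_le_mul_of_nonneg_left (log_le_sub_one_of_pos (div_pos hb ha)) ha.le
  have hab : a * (b / a) = b := by field_simp
  rw [log_div hb.ne' ha.ne', mul_sub, mul_sub, hab] at h
  linarith

lemma antitoneOn_Ico_of_hasDerivAt_nonpos {f f' : ℝ → ℝ} {a b : ℝ}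
    (hf : ∀ t ∈ Ico a b, HasDerivAt f (f' t) t) (hf' : ∀ t ∈ Ico a b, f' t ≤ 0) :
    AntitoneOn f (Ico a b) :=
  antitoneOn_of_hasDerivWithinAt_nonpos (convex_Ico a b)
    (fun t ht => (hf t ht).continuousAt.continuousWithinAt)
    (fun t ht => (hf t (interior_subset ht)).hasDerivWithinAt)
    (fun t ht => hf' t (interior_subset ht))

lemma eq_of_hasDerivAt_zero_Ico {f : ℝ → ℝ} {a b : ℝ} (hf : ∀ t ∈ Ico a b, HasDerivAt f 0 t)
    {t : ℝ} (ht : t ∈ Ico a b) : f t = f a := by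
  have ha : a ∈ Ico a b := ⟨le_rfl, ht.1.trans_lt ht.2⟩
  have hdecr := antitoneOn_Ico_of_hasDerivAt_nonpos hf (fun _ _ => le_rfl)
  have hincr := antitoneOn_Ico_of_hasDerivAt_nonpos (fun s hs => (hf s hs).neg)
    (fun _ _ => neg_zero.le)
  exact le_antisymm (hdecr ha ht ht.1) (neg_le_neg_iff.1 (hincr ha ht ht.1))

section Flow

variable {N : ℕ} {k : ℝ} {G : (Fin N → ℝ) → (Fin N → ℝ)}

lemma sum_Fbar1_eq_zero {M : Fin N → ℝ} (U : Fin N → ℝ) (hM : ∑ i, M i ≠ 0) :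
    ∑ i, Fbar1 k G M U i = 0 := by
  have hH : Htilde k G M U * ∑ i, M i
      = ∑ i, (M i * G U i - (1 / k) * (M i * log (M i))) := div_mul_cancel₀ _ hM
  calc ∑ i, Fbar1 k G M U i
      = ∑ i, (M i * Htilde k G M U - (M i * G U i - (1 / k) * (M i * log (M i)))) :=
        sum_congr rfl fun i _ => by simp only [Fbar1, Ftilde1]; ring
    _ = 0 := by rw [sum_sub_distrib, ← sum_mul, mul_comm, hH, sub_self]

lemma sum_mul_Ftilde2 (M U v : Fin N → ℝ) :
    ∑ j, v j * Ftilde2 G M U j = ∑ i, M i * fderiv ℝ G U v i := by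
  simp only [Ftilde2, mul_sum]
  rw [sum_comm]
  refine sum_congr rfl fun i _ => ?_
  rw [← sum_mul_apply_single (fderiv ℝ G U) v i, mul_sum]
  exact sum_congr rfl fun j _ => by ring

theorem Ftilde_monotone (hk : 0 < k) (hG : Differentiable ℝ G)
    (hconv : ∀ i, ConvexOn ℝ univ fun x => G x i) {M U M' U' : Fin N → ℝ}
    (hM : ∀ i, 0 < M i) (hM' : ∀ i, 0 < M' i) (hmass : ∑ i, M i = ∑ i, M' i) :
    0 ≤ ∑ i, (M i - M' i) * (Ftilde1 k G M U i - Ftilde1 k G M' U' i)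
      + ∑ j, (U j - U' j) * (Ftilde2 G M U j - Ftilde2 G M' U' j) := by
  set ΔH := Htilde k G M U - Htilde k G M' U'
  have hFtilde2 : ∑ j, (U j - U' j) * (Ftilde2 G M U j - Ftilde2 G M' U' j)
      = ∑ i, (M i * fderiv ℝ G U (U - U') i - M' i * fderiv ℝ G U' (U - U') i) := by
    simp only [mul_sub, sum_sub_distrib]
    exact congr_arg₂ _ (sum_mul_Ftilde2 M U (U - U')) (sum_mul_Ftilde2 M' U' (U - U'))
  have hsplit : ∑ i, (M i - M' i) * (Ftilde1 k G M U i - Ftilde1 k G M' U' i)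
      + ∑ j, (U j - U' j) * (Ftilde2 G M U j - Ftilde2 G M' U' j)
      = ∑ i, (M i * (fderiv ℝ G U (U - U') i - (G U i - G U' i))
          + M' i * ((G U i - G U' i) - fderiv ℝ G U' (U - U') i)
          + (1 / k) * ((M i - M' i) * (log (M i) - log (M' i))))
        + ΔH * (∑ i, M i - ∑ i, M' i) := by
    rw [hFtilde2, ← sum_add_distrib, mul_sub, mul_sum, mul_sum, ← sum_sub_distrib,
      ← sum_add_distrib]
    exact sum_congr rfl fun i _ => by simp only [Ftilde1, ΔH]; ring
  rw [hsplit, hmass, sub_self, mul_zero, add_zero]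
  refine sum_nonneg fun i _ => add_nonneg (add_nonneg ?_ ?_) ?_
  · have h := fderiv_apply_sub_le_of_convexOn hG hconv U U' i
    rw [← neg_sub U U', map_neg, Pi.neg_apply] at h
    exact mul_nonneg (hM i).le (by linarith)
  · exact mul_nonneg (hM' i).le
      (sub_nonneg.2 (fderiv_apply_sub_le_of_convexOn hG hconv U' U i))
  · exact mul_nonneg (one_div_pos.2 hk).le (sub_mul_log_sub_log_nonneg (hM i) (hM' i))

noncomputable def lyapunov (Mstar Ustar M U : Fin N → ℝ) : ℝ :=
  ∑ i, (Mstar i * (log (Mstar i) - log (M i)) - Mstar i + M i)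
    + (1 / 2) * ∑ j, (U j - Ustar j) ^ 2

lemma half_sum_sq_sub_le_lyapunov {Mstar M : Fin N → ℝ} (hMstar : ∀ i, 0 < Mstar i)
    (hM : ∀ i, 0 < M i) (Ustar U : Fin N → ℝ) :
    (1 / 2) * ∑ j, (U j - Ustar j) ^ 2 ≤ lyapunov Mstar Ustar M U :=
  le_add_of_nonneg_left (sum_nonneg fun i _ => mul_log_sub_log_sub_add_nonneg (hMstar i) (hM i))

lemma sum_sq_add_sq_le_of_lyapunov_le {Mstar Ustar M U : Fin N → ℝ} {c : ℝ}
    (hMstar : ∀ i, 0 < Mstar i) (hM : ∀ i, 0 < M i) (hmass : ∑ i, M i = ∑ i, Mstar i)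
    (hW : lyapunov Mstar Ustar M U ≤ c) :
    ∑ j, (M j ^ 2 + U j ^ 2) ≤ (∑ i, Mstar i) ^ 2 + 4 * c + 2 * ∑ j, Ustar j ^ 2 := by
  have hMsq : ∑ j, M j ^ 2 ≤ (∑ i, Mstar i) ^ 2 :=
    hmass ▸ sum_sq_le_sq_sum_of_nonneg fun j _ => (hM j).le
  have hUsq : ∑ j, U j ^ 2 ≤ 2 * (∑ j, (U j - Ustar j) ^ 2 + ∑ j, Ustar j ^ 2) := by
    rw [← sum_add_distrib, mul_sum]
    exact sum_le_sum fun j _ => by simpa using add_sq_le (a := U j - Ustar j) (b := Ustar j)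
  have hUdist := (half_sum_sq_sub_le_lyapunov hMstar hM Ustar U).trans hW
  rw [sum_add_distrib]
  linarith

lemma hasDerivAt_relEntropy_term {m : ℝ → ℝ} {m' a t : ℝ} (hm : HasDerivAt m m' t)
    (hpos : 0 < m t) :
    HasDerivAt (fun s => a * (log a - log (m s)) - a + m s) ((m t - a) * (m' / m t)) t := by
  refine ((((hm.log hpos.ne').const_sub (log a)).const_mul a).sub_const a |>.add hm).congr_deriv ?_
  field_simp
  ring

lemma hasDerivAt_lyapunov_of_flow {M U : ℝ → Fin N → ℝ} {t : ℝ}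
    (hflowM : ∀ i, HasDerivAt (fun s => M s i) (-Fbar1 k G (M t) (U t) i) t)
    (hflowU : ∀ j, HasDerivAt (fun s => U s j) (-Ftilde2 G (M t) (U t) j) t)
    (hpos : ∀ i, 0 < M t i) (Mstar Ustar : Fin N → ℝ) :
    HasDerivAt (fun s => lyapunov Mstar Ustar (M s) (U s))
      (-(∑ i, (M t i - Mstar i) * Ftilde1 k G (M t) (U t) i
        + ∑ j, (U t j - Ustar j) * Ftilde2 G (M t) (U t) j)) t := by
  have hentropy : ∀ i, HasDerivAt (fun s => Mstar i * (log (Mstar i) - log (M s i)) - Mstar i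
      + M s i) (-((M t i - Mstar i) * Ftilde1 k G (M t) (U t) i)) t := by
    intro i
    refine (hasDerivAt_relEntropy_term (hflowM i) (hpos i)).congr_deriv ?_
    rw [Fbar1, neg_div, mul_div_cancel_left₀ _ (hpos i).ne']
    ring
  have hsq : ∀ j, HasDerivAt (fun s => (U s j - Ustar j) ^ 2)
      (-(2 * ((U t j - Ustar j) * Ftilde2 G (M t) (U t) j))) t := by
    intro j
    refine (((hflowU j).sub_const (Ustar j)).pow 2).congr_deriv ?_
    push_cast
    ring
  refine ((HasDerivAt.fun_sum (u := univ) fun i _ => hentropy i).add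
    ((HasDerivAt.fun_sum (u := univ) fun j _ => hsq j).const_mul (1 / 2))).congr_deriv ?_
  simp only [sum_neg_distrib, ← mul_sum]
  ring

end Flow

theorem discrete_HRF_solution_bounded_general
    (N : ℕ) (hN : 1 ≤ N) (k : ℝ) (hk : 0 < k)
    (G : (Fin N → ℝ) → (Fin N → ℝ))
    (hGdiff : Differentiable ℝ G)
    (hGconv : ∀ i : Fin N, ConvexOn ℝ Set.univ (fun U => G U i))
    (T : ℝ)
    (M U : ℝ → Fin N → ℝ)
    (hflowM : ∀ t ∈ Set.Ico (0 : ℝ) T, ∀ i,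
      HasDerivAt (fun s => M s i) (-(Fbar1 k G (M t) (U t) i)) t)
    (hflowU : ∀ t ∈ Set.Ico (0 : ℝ) T, ∀ i,
      HasDerivAt (fun s => U s i) (-(Ftilde2 G (M t) (U t) i)) t)
    (hMpos : ∀ t ∈ Set.Ico (0 : ℝ) T, ∀ i, 0 < M t i)
    (hmass0 : (1 / (N : ℝ)) * ∑ i, M 0 i = 1)
    (Mstar Ustar : Fin N → ℝ)
    (hMstarpos : ∀ i, 0 < Mstar i)
    (hstarmass : (1 / (N : ℝ)) * ∑ i, Mstar i = 1)
    (hstar1 : ∀ i, Ftilde1 k G Mstar Ustar i = 0)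
    (hstar2 : ∀ j, Ftilde2 G Mstar Ustar j = 0) :
    ∃ C : ℝ, ∀ t ∈ Set.Ico (0 : ℝ) T,
      Real.sqrt (∑ j, ((M t j) ^ 2 + (U t j) ^ 2)) ≤ C := by
  have : Nonempty (Fin N) := ⟨⟨0, hN⟩⟩
  have hmass : ∀ t ∈ Ico 0 T, ∑ i, M t i = ∑ i, Mstar i := by
    intro t ht
    have hconserved : ∀ s ∈ Ico 0 T, HasDerivAt (fun s => ∑ i, M s i) 0 s := fun s hs =>
      (HasDerivAt.fun_sum fun i _ => hflowM s hs i).congr_deriv <| by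
        rw [sum_neg_distrib, sum_Fbar1_eq_zero _ (sum_pos (fun i _ => hMpos s hs i)
          univ_nonempty).ne', neg_zero]
    rw [eq_of_hasDerivAt_zero_Ico hconserved ht]
    exact mul_left_cancel₀ (left_ne_zero_of_mul_eq_one hmass0) (hmass0.trans hstarmass.symm)
  have hW : AntitoneOn (fun t => lyapunov Mstar Ustar (M t) (U t)) (Ico 0 T) :=
    antitoneOn_Ico_of_hasDerivAt_nonpos
      (fun t ht => hasDerivAt_lyapunov_of_flow (hflowM t ht) (hflowU t ht) (hMpos t ht) _ _)
      fun t ht => neg_nonpos.2 <| by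
        simpa [hstar1, hstar2] using Ftilde_monotone hk hGdiff hGconv (hMpos t ht) hMstarpos
          (U := U t) (U' := Ustar) (hmass t ht)
  refine ⟨√((∑ i, Mstar i) ^ 2 + 4 * lyapunov Mstar Ustar (M 0) (U 0) + 2 * ∑ j, Ustar j ^ 2),
    fun t ht => sqrt_le_sqrt ?_⟩
  exact sum_sq_add_sq_le_of_lyapunov_le hMstarpos (hMpos t ht) (hmass t ht)
    (hW ⟨le_rfl, ht.1.trans_lt ht.2⟩ ht ht.1)

/-- a positive solution of the discrete Hessian Riemannian flow on `[0,T)`,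
`T < ∞`, with initial mass `1`, stays bounded, provided the discrete stationary problem
`F̃(M*,U*) = 0` has a positive solution of mass `1`. -/
theorem discrete_HRF_solution_bounded
    (N : ℕ) (hN : 1 ≤ N) (k : ℝ) (hk : 0 < k)
    (G : (Fin N → ℝ) → (Fin N → ℝ))
    (hGdiff : Differentiable ℝ G)
    (hGconv : ∀ i : Fin N, ConvexOn ℝ Set.univ (fun U => G U i))
    (T : ℝ) (hT0 : 0 < T)
    (M U : ℝ → Fin N → ℝ)
    (hflowM : ∀ t ∈ Set.Ico (0 : ℝ) T, ∀ i,
      HasDerivAt (fun s => M s i) (-(Fbar1 k G (M t) (U t) i)) t)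
    (hflowU : ∀ t ∈ Set.Ico (0 : ℝ) T, ∀ i,
      HasDerivAt (fun s => U s i) (-(Ftilde2 G (M t) (U t) i)) t)
    (hMpos : ∀ t ∈ Set.Ico (0 : ℝ) T, ∀ i, 0 < M t i)
    (hmass0 : (1 / (N : ℝ)) * ∑ i, M 0 i = 1)
    (Mstar Ustar : Fin N → ℝ)
    (hMstarpos : ∀ i, 0 < Mstar i)
    (hstarmass : (1 / (N : ℝ)) * ∑ i, Mstar i = 1)
    (hstar1 : ∀ i, Ftilde1 k G Mstar Ustar i = 0)
    (hstar2 : ∀ j, Ftilde2 G Mstar Ustar j = 0) :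
    ∃ C : ℝ, ∀ t ∈ Set.Ico (0 : ℝ) T,
      Real.sqrt (∑ j, ((M t j) ^ 2 + (U t j) ^ 2)) ≤ C :=
  discrete_HRF_solution_bounded_general N hN k hk G hGdiff hGconv T M U hflowM hflowU hMpos hmass0
    Mstar Ustar hMstarpos hstarmass hstar1 hstar2
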